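/- In the Juliette calculus, the dispatch function getmd is stable under shadowed extension: if md' is a method definition equivalent (same name, equivalent argument type annotations) to a method md already at the top of table M • md, then for all function names m and tag vectors σ̄, getmd(M • md • md', m, σ̄) selects md' in every case where getmd(M • md, m, σ̄) would select md, and agrees with getmd(M • md, m, σ̄) otherwise. -/
import Mathlib


/-- A Juliette method definition: a function name, typed parameters, and a body
(the body's representation is abstract). -/
structure MDef0 (Ty B : Type) where
  name : ℕ
  params : List (ℕ × Ty)
  body : B

/-- Argument type annotations of a method. -/
def MDef0.argTys {Ty B : Type} (md : MDef0 Ty B) : List Ty := md.params.map Prod.snd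

variable {Ty B : Type}

/-- Pointwise subtyping on annotation/tag vectors. -/
def subL (sub : Ty → Ty → Prop) : List Ty → List Ty → Prop := List.Forall₂ sub

/-- Two method definitions are equivalent: same name and mutually subtyping
argument annotations. -/
def MEquiv (sub : Ty → Ty → Prop) (md md' : MDef0 Ty B) : Prop :=
  md.name = md'.name ∧ subL sub md.argTys md'.argTys ∧ subL sub md'.argTys md.argTys

/-- Membership in latest(M): md occurs in the table (head of the list is the
newest definition) and no strictly newer definition is equivalent to it. -/
def LatestMem (sub : Ty → Ty → Prop) (M : List (MDef0 Ty B)) (md : MDef0 Ty B) : Prop :=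
  ∃ i : ℕ, M[i]? = some md ∧
    ∀ j : ℕ, j < i → ∀ md', M[j]? = some md' → ¬ MEquiv sub md md'

/-- The set of applicable methods: applicable(mds, m, σ̄). -/
def Applicable (sub : Ty → Ty → Prop) (mds : List (MDef0 Ty B)) (m : ℕ)
    (σs : List Ty) (md : MDef0 Ty B) : Prop :=
  md ∈ mds ∧ md.name = m ∧ subL sub σs md.argTys

/-- getmd(M, m, σ̄) = min(applicable(latest(M), m, σ̄)): md is a surviving
(non-shadowed) applicable method whose annotations are subtypes of those of
every other surviving applicable method. -/
def GetMd (sub : Ty → Ty → Prop) (M : List (MDef0 Ty B)) (m : ℕ)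
    (σs : List Ty) (md : MDef0 Ty B) : Prop :=
  LatestMem sub M md ∧ md.name = m ∧ subL sub σs md.argTys ∧
    ∀ md', LatestMem sub M md' → md'.name = m → subL sub σs md'.argTys →
      subL sub md.argTys md'.argTys


section Helpers
variable {Ty B : Type} {sub : Ty → Ty → Prop}

lemma subL_refl (hrefl : ∀ a : Ty, sub a a) (l : List Ty) : subL sub l l := by
  induction l with
  | nil => exact List.Forall₂.nil
  | cons a l ih => exact List.Forall₂.cons (hrefl a) ih

lemma subL_trans (htrans : ∀ a b c : Ty, sub a b → sub b c → sub a c)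
    {l₁ l₂ l₃ : List Ty} (h₁ : subL sub l₁ l₂) (h₂ : subL sub l₂ l₃) :
    subL sub l₁ l₃ := by
  induction h₁ generalizing l₃ with
  | nil => cases h₂; exact List.Forall₂.nil
  | cons h t ih =>
    cases h₂ with
    | cons h' t' => exact List.Forall₂.cons (htrans _ _ _ h h') (ih t')

lemma MEquiv_trans (htrans : ∀ a b c : Ty, sub a b → sub b c → sub a c)
    {x y z : MDef0 Ty B} (h₁ : MEquiv sub x y) (h₂ : MEquiv sub y z) :
    MEquiv sub x z :=
  ⟨h₁.1.trans h₂.1, subL_trans htrans h₁.2.1 h₂.2.1, subL_trans htrans h₂.2.2 h₁.2.2⟩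

lemma latest_head (M : List (MDef0 Ty B)) (x : MDef0 Ty B) :
    LatestMem sub (x :: M) x :=
  ⟨0, by simp, fun j hj _ _ => absurd hj (Nat.not_lt_zero j)⟩

lemma latest_tail {M : List (MDef0 Ty B)} {y x : MDef0 Ty B}
    (h : LatestMem sub (y :: M) x) (hne : x ≠ y) : LatestMem sub M x := by
  obtain ⟨i, hi, hmin⟩ := h
  cases i with
  | zero => simp at hi; exact absurd hi.symm hne
  | succ k =>
    refine ⟨k, by simpa using hi, fun j hj md'' hmd'' => ?_⟩
    exact hmin (j+1) (Nat.succ_lt_succ hj) md'' (by simpa using hmd'')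

lemma latest_not_equiv_head {M : List (MDef0 Ty B)} {y x : MDef0 Ty B}
    (h : LatestMem sub (y :: M) x) (hne : x ≠ y) : ¬ MEquiv sub x y := by
  obtain ⟨i, hi, hmin⟩ := h
  cases i with
  | zero => simp at hi; exact absurd hi.symm hne
  | succ k => exact hmin 0 (Nat.succ_pos k) y (by simp)

lemma latest_cons {M : List (MDef0 Ty B)} {y x : MDef0 Ty B}
    (h : LatestMem sub M x) (hne : ¬ MEquiv sub x y) : LatestMem sub (y :: M) x := by
  obtain ⟨i, hi, hmin⟩ := h
  refine ⟨i+1, by simpa using hi, fun j hj md'' hmd'' => ?_⟩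
  cases j with
  | zero => simp at hmd''; exact hmd'' ▸ hne
  | succ j' => exact hmin j' (Nat.lt_of_succ_lt_succ hj) md'' (by simpa using hmd'')

end Helpers

/-- Dispatch is stable under shadowed extension: if md' is equivalent to the
method md at the top of the table md :: M (i.e. M • md), then for all names m
and tag vectors σ̄, getmd on the extended table md' :: md :: M selects md' in
every case where getmd on md :: M would select md, and agrees with getmd on
md :: M otherwise. Subtyping is assumed reflexive and transitive. -/

theorem getmd_stable_under_shadowing (sub : Ty → Ty → Prop)
    (hrefl : ∀ a : Ty, sub a a)
    (htrans : ∀ a b c : Ty, sub a b → sub b c → sub a c)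
    (M : List (MDef0 Ty B)) (md md' : MDef0 Ty B)
    (hequiv : MEquiv sub md md') :
    ∀ (m : ℕ) (σs : List Ty),
      (GetMd sub (md :: M) m σs md → GetMd sub (md' :: md :: M) m σs md') ∧
      (∀ md₀ : MDef0 Ty B, GetMd sub (md :: M) m σs md₀ → md₀ ≠ md →
        GetMd sub (md' :: md :: M) m σs md₀) := by
  obtain ⟨hname, h₁₂, h₂₁⟩ := hequiv
  have hequiv' : MEquiv sub md md' := ⟨hname, h₁₂, h₂₁⟩
  intro m σs
  constructor
  · rintro ⟨hlat, hnm, happ, hmin⟩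
    refine ⟨latest_head _ _, hname ▸ hnm, subL_trans htrans happ h₁₂, ?_⟩
    intro md₁ hlat₁ hnm₁ happ₁
    by_cases h : md₁ = md'
    · subst h; exact subL_refl hrefl _
    · have hlat₁' : LatestMem sub (md :: M) md₁ := latest_tail hlat₁ h
      exact subL_trans htrans h₂₁ (hmin md₁ hlat₁' hnm₁ happ₁)
  · rintro md₀ ⟨hlat, hnm, happ, hmin⟩ hne
    have hnequiv : ¬ MEquiv sub md₀ md := latest_not_equiv_head hlat hne
    have hnequiv' : ¬ MEquiv sub md₀ md' := fun h =>
      hnequiv (MEquiv_trans htrans h ⟨hname.symm, h₂₁, h₁₂⟩)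
    refine ⟨latest_cons hlat hnequiv', hnm, happ, ?_⟩
    intro md₁ hlat₁ hnm₁ happ₁
    by_cases h : md₁ = md'
    · subst h
      have : subL sub md₀.argTys md.argTys :=
        hmin md (latest_head _ _) (hname.trans hnm₁) (subL_trans htrans happ₁ h₂₁)
      exact subL_trans htrans this h₁₂
    · exact hmin md₁ (latest_tail hlat₁ h) hnm₁ happ₁
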